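/- Anisotropic conformable Hardy inequality with weight |x_k|^α: let α ∈ (0,1], let Ω ⊆ (0,∞)^n be open, let a ∈ ℝ with a > α, and let p_1,…,p_n satisfy 1 < p_k < a + α and p_k(1−α) ≥ a − α for each k. Then for every nonnegative continuously differentiable function u with compact support in Ω: ∑_{k=1}^n ∫_Ω x_k^α·|D^α_{x_k} u(x)|^{p_k} d_α x ≥ ∑_{k=1}^n ((α + a − p_k)/p_k)^{p_k} ∫_Ω u(x)^{p_k}·x_k^{−α(p_k − 1)} d_α x. -/

import Mathlib

open Filter Topology MeasureTheory

/-- The conformable partial derivative of order `α` in the `k`-th coordinate: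
`D^α_{x_k} f (x) = x_k^{1-α} ∂f/∂x_k (x)`. -/
noncomputable def confPDeriv (α : ℝ) {n : ℕ} (f : (Fin n → ℝ) → ℝ) (k : Fin n)
    (x : Fin n → ℝ) : ℝ :=
  (x k) ^ (1 - α) * deriv (fun t : ℝ => f (Function.update x k t)) (x k)

/-!
Fix a coordinate `k`. On each line parallel to the `k`-th axis the weights split into a power of
`t = x_k` times a positive constant, so by Fubini the `k`-th term reduces to the one-dimensional
weighted Hardy inequality `((γ - p + 1) / p) ^ p ∫ v ^ p t ^ (γ - p) ≤ ∫ t ^ γ |v'| ^ p` with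
`γ = α (2 - p) + p - 1`. Its constant `(α (2 - p) / p) ^ p` dominates `((α + a - p) / p) ^ p`
precisely because `p (1 - α) ≥ a - α`.

The one-dimensional inequality comes from `∫ (t ^ (γ - p + 1) v ^ p)' = 0`: the cross term
`p t ^ (γ - p + 1) v ^ (p - 1) v'` is bounded by the tangent-line form of Young's inequality,
`p s ^ (p - 1) b ≤ (p - 1) s ^ p + b ^ p`, applied with a scaling `c = (γ - p + 1) / p` that makes
the two `∫ v ^ p t ^ (γ - p)` terms combine.
-/

open Set Function

theorem ContDiffOn.contDiff_of_tsupport_subset {𝕜 E F : Type*} [NontriviallyNormedField 𝕜]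
    [NormedAddCommGroup E] [NormedSpace 𝕜 E] [NormedAddCommGroup F] [NormedSpace 𝕜 F]
    {n : WithTop ℕ∞} {f : E → F} {U : Set E} (hf : ContDiffOn 𝕜 n f U) (hU : IsOpen U)
    (hfU : tsupport f ⊆ U) : ContDiff 𝕜 n f := by
  refine contDiff_iff_contDiffAt.2 fun x => ?_
  by_cases hx : x ∈ U
  · exact hf.contDiffAt (hU.mem_nhds hx)
  · exact contDiffAt_const.congr_of_eventuallyEq
      (notMem_tsupport_iff_eventuallyEq.1 fun h => hx (hfU h))

theorem integrable_of_continuousOn_of_eq_zero_off_tsupport {X E : Type*} [TopologicalSpace X]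
    [R1Space X] [MeasurableSpace X] [OpensMeasurableSpace X] [NormedAddCommGroup E]
    {μ : Measure X} [IsFiniteMeasureOnCompacts μ] {f : X → E} {g : X → ℝ} {U : Set X}
    (hU : IsOpen U) (hf : ContinuousOn f U) (hg : HasCompactSupport g) (hgU : tsupport g ⊆ U)
    (hfg : ∀ x ∉ tsupport g, f x = 0) : Integrable f μ := by
  have hfg' : tsupport f ⊆ tsupport g :=
    closure_minimal (fun x hx => by_contra fun h => hx (hfg x h)) (isClosed_tsupport g)
  exact (hf.continuous_of_tsupport_subset hU (hfg'.trans hgU)).integrable_of_hasCompactSupport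
    (HasCompactSupport.intro hg hfg)

theorem mul_rpow_sub_one_mul_le {p s b : ℝ} (hp : 1 < p) (hs : 0 ≤ s) (hb : 0 ≤ b) :
    p * (s ^ (p - 1) * b) ≤ (p - 1) * s ^ p + b ^ p := by
  have hq := (Real.HolderConjugate.conjExponent hp).symm
  have hyoung := Real.young_inequality_of_nonneg (Real.rpow_nonneg hs (p - 1)) hb hq
  have hs' : (s ^ (p - 1)) ^ p.conjExponent = s ^ p := by
    rw [← Real.rpow_mul hs, Real.conjExponent, mul_div_cancel₀ _ (by linarith)]
  rw [hs', Real.conjExponent, div_div_eq_mul_div] at hyoung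
  have hp0 : 0 < p := by linarith
  calc p * (s ^ (p - 1) * b) ≤ p * (s ^ p * (p - 1) / p + b ^ p / p) := by gcongr
    _ = (p - 1) * s ^ p + b ^ p := by field_simp

theorem hardy_pointwise_bound {p γ c t s d : ℝ} (hp : 1 < p) (hc : 0 < c) (ht : 0 < t)
    (hs : 0 ≤ s) :
    -(p * c ^ (p - 1) * (t ^ (γ - p + 1) * (s ^ (p - 1) * d)))
      ≤ (p - 1) * c ^ p * (t ^ (γ - p) * s ^ p) + t ^ γ * |d| ^ p := by
  have hp0 : 0 < p := by linarith
  have hS : 0 ≤ c * s * t ^ ((γ - p) / p) := by positivity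
  have hB : 0 ≤ t ^ (γ / p) * |d| := by positivity
  have key := mul_rpow_sub_one_mul_le hp hS hB
  have hexp : t ^ ((γ - p) / p * (p - 1)) * t ^ (γ / p) = t ^ (γ - p + 1) := by
    rw [← Real.rpow_add ht]
    congr 1
    field_simp
    ring
  rw [Real.mul_rpow (by positivity) (by positivity), Real.mul_rpow hc.le hs,
    Real.mul_rpow (by positivity) (by positivity), Real.mul_rpow hc.le hs,
    Real.mul_rpow (by positivity) (abs_nonneg d), ← Real.rpow_mul ht.le, ← Real.rpow_mul ht.le,
    ← Real.rpow_mul ht.le, div_mul_cancel₀ _ hp0.ne', div_mul_cancel₀ _ hp0.ne'] at key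
  calc -(p * c ^ (p - 1) * (t ^ (γ - p + 1) * (s ^ (p - 1) * d)))
      ≤ p * c ^ (p - 1) * (t ^ (γ - p + 1) * (s ^ (p - 1) * |d|)) := by
        rw [← mul_neg, ← mul_neg, ← mul_neg]
        gcongr
        exact neg_le_abs d
    _ = p * (c ^ (p - 1) * s ^ (p - 1) * t ^ ((γ - p) / p * (p - 1)) * (t ^ (γ / p) * |d|)) := by
        rw [← hexp]; ring
    _ ≤ (p - 1) * (c ^ p * s ^ p * t ^ (γ - p)) + t ^ γ * |d| ^ p := key
    _ = (p - 1) * c ^ p * (t ^ (γ - p) * s ^ p) + t ^ γ * |d| ^ p := by ring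

section WeightedHardy

variable {p : ℝ} {v : ℝ → ℝ}

theorem integrable_rpow_mul_of_eq_zero_off_tsupport (r : ℝ) {φ : ℝ → ℝ} (hφ : Continuous φ)
    (hcs : HasCompactSupport v) (hpos : tsupport v ⊆ Ioi 0) (hφv : ∀ t ∉ tsupport v, φ t = 0) :
    Integrable fun t => t ^ r * φ t :=
  integrable_of_continuousOn_of_eq_zero_off_tsupport isOpen_Ioi
    (ContinuousOn.mul (f := fun t : ℝ => t ^ r)
      (fun t ht => (Real.continuousAt_rpow_const t r (Or.inl (ne_of_gt ht))).continuousWithinAt)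
      hφ.continuousOn)
    hcs hpos fun t ht => by simp [hφv t ht]

theorem eq_zero_and_deriv_eq_zero_of_notMem_tsupport {t : ℝ} (ht : t ∉ tsupport v) :
    v t = 0 ∧ deriv v t = 0 :=
  ⟨image_eq_zero_of_notMem_tsupport ht,
    image_eq_zero_of_notMem_tsupport fun h => ht (tsupport_deriv_subset h)⟩

theorem integrable_rpow_mul_rpow (hp : 0 < p) (hv : Continuous v) (hcs : HasCompactSupport v)
    (hpos : tsupport v ⊆ Ioi 0) (r : ℝ) : Integrable fun t => t ^ r * v t ^ p :=
  integrable_rpow_mul_of_eq_zero_off_tsupport r (hv.rpow_const fun _ => Or.inr hp.le) hcs hpos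
    fun t ht => by
      simp [(eq_zero_and_deriv_eq_zero_of_notMem_tsupport ht).1, Real.zero_rpow hp.ne']

theorem integrable_rpow_mul_rpow_mul_deriv (hp : 1 ≤ p) (hv : ContDiff ℝ 1 v)
    (hcs : HasCompactSupport v) (hpos : tsupport v ⊆ Ioi 0) (r : ℝ) :
    Integrable fun t => t ^ r * (v t ^ (p - 1) * deriv v t) :=
  integrable_rpow_mul_of_eq_zero_off_tsupport r
    ((hv.continuous.rpow_const fun _ => Or.inr (by linarith)).mul (hv.continuous_deriv le_rfl))
    hcs hpos fun t ht => by simp [(eq_zero_and_deriv_eq_zero_of_notMem_tsupport ht).2]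

theorem integrable_rpow_mul_abs_deriv_rpow (hp : 0 < p) (hv : ContDiff ℝ 1 v)
    (hcs : HasCompactSupport v) (hpos : tsupport v ⊆ Ioi 0) (r : ℝ) :
    Integrable fun t => t ^ r * |deriv v t| ^ p :=
  integrable_rpow_mul_of_eq_zero_off_tsupport r
    ((hv.continuous_deriv le_rfl).abs.rpow_const fun _ => Or.inr hp.le) hcs hpos fun t ht => by
      simp [(eq_zero_and_deriv_eq_zero_of_notMem_tsupport ht).2, Real.zero_rpow hp.ne']

theorem integral_rpow_mul_rpow_by_parts (hp : 1 ≤ p) (hv : ContDiff ℝ 1 v)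
    (hcs : HasCompactSupport v) (hpos : tsupport v ⊆ Ioi 0) (β : ℝ) :
    β * ∫ t, t ^ (β - 1) * v t ^ p = -(p * ∫ t, t ^ β * (v t ^ (p - 1) * deriv v t)) := by
  have hp0 : 0 < p := by linarith
  have hderiv : ∀ t, HasDerivAt (fun t => t ^ β * v t ^ p)
      (β * (t ^ (β - 1) * v t ^ p) + p * (t ^ β * (v t ^ (p - 1) * deriv v t))) t := by
    intro t
    by_cases ht : t ∈ tsupport v
    · have hw := Real.hasDerivAt_rpow_const (p := β) (Or.inl (ne_of_gt (hpos ht)))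
      have hvp := (hv.differentiable one_ne_zero t).hasDerivAt.rpow_const (p := p) (Or.inr hp)
      exact (hw.mul hvp).congr_deriv (by ring)
    · obtain ⟨hvt, hdvt⟩ := eq_zero_and_deriv_eq_zero_of_notMem_tsupport ht
      have hev : (fun t => t ^ β * v t ^ p) =ᶠ[𝓝 t] fun _ => 0 := by
        filter_upwards [notMem_tsupport_iff_eventuallyEq.1 ht] with s hs
        simp [hs, Real.zero_rpow hp0.ne']
      simpa [hvt, hdvt, Real.zero_rpow hp0.ne'] using
        (hasDerivAt_const t (0 : ℝ)).congr_of_eventuallyEq hev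
  have hI := (integrable_rpow_mul_rpow hp0 hv.continuous hcs hpos (β - 1)).const_mul β
  have hK := (integrable_rpow_mul_rpow_mul_deriv hp hv hcs hpos β).const_mul p
  have hibp := integral_eq_zero_of_hasDerivAt_of_integrable hderiv (hI.add hK)
    (integrable_rpow_mul_rpow hp0 hv.continuous hcs hpos β)
  rw [integral_add hI hK, integral_const_mul, integral_const_mul] at hibp
  linarith

theorem weighted_hardy {γ : ℝ} (hp : 1 < p) (hγ : 0 < γ - p + 1) (hv : ContDiff ℝ 1 v)
    (hcs : HasCompactSupport v) (hpos : tsupport v ⊆ Ioi 0) (hv0 : 0 ≤ v) :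
    ((γ - p + 1) / p) ^ p * ∫ t, v t ^ p * t ^ (γ - p) ≤ ∫ t, t ^ γ * |deriv v t| ^ p := by
  have hp0 : 0 < p := by linarith
  set c := (γ - p + 1) / p with hc_def
  have hc : 0 < c := div_pos hγ hp0
  have hI := integrable_rpow_mul_rpow hp0 hv.continuous hcs hpos (γ - p)
  have hK := integrable_rpow_mul_rpow_mul_deriv hp.le hv hcs hpos (γ - p + 1)
  have hJ := integrable_rpow_mul_abs_deriv_rpow hp0 hv hcs hpos γ
  have hibp := integral_rpow_mul_rpow_by_parts hp.le hv hcs hpos (γ - p + 1)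
  rw [add_sub_cancel_right] at hibp
  have hmono : ∫ t, -(p * c ^ (p - 1) * (t ^ (γ - p + 1) * (v t ^ (p - 1) * deriv v t)))
      ≤ ∫ t, ((p - 1) * c ^ p * (t ^ (γ - p) * v t ^ p) + t ^ γ * |deriv v t| ^ p) := by
    refine integral_mono (hK.const_mul _).neg ((hI.const_mul _).add hJ) fun t => ?_
    by_cases ht : t ∈ tsupport v
    · exact hardy_pointwise_bound hp hc (hpos ht) (hv0 t)
    · obtain ⟨hvt, hdvt⟩ := eq_zero_and_deriv_eq_zero_of_notMem_tsupport ht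
      simp [hvt, hdvt, Real.zero_rpow hp0.ne']
  rw [integral_neg, integral_add (hI.const_mul _) hJ, integral_const_mul, integral_const_mul]
    at hmono
  have hcp : c ^ (p - 1) * (γ - p + 1) = p * c ^ p := by
    rw [show γ - p + 1 = p * c by rw [hc_def]; field_simp, Real.rpow_sub_one hc.ne']
    field_simp
  simp_rw [mul_comm (v _ ^ p)]
  linear_combination hmono + c ^ (p - 1) * hibp - (∫ t, t ^ (γ - p) * v t ^ p) * hcp

end WeightedHardy

theorem integral_le_integral_of_integral_update_le {n : ℕ} {F G : (Fin n → ℝ) → ℝ}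
    (hF : Integrable F) (hG : Integrable G) (k : Fin n)
    (h : ∀ x, ∫ t, G (update x k t) ≤ ∫ t, F (update x k t)) : ∫ x, G x ≤ ∫ x, F x := by
  obtain ⟨m, rfl⟩ : ∃ m, n = m + 1 := ⟨n - 1, (Nat.succ_pred_eq_of_pos k.pos).symm⟩
  let e := (MeasurableEquiv.piFinSuccAbove (fun _ : Fin (m + 1) => ℝ) k).symm
  have he : MeasurePreserving e (volume.prod volume) volume := by
    rw [← Measure.volume_eq_prod]
    exact (volume_preserving_piFinSuccAbove (fun _ : Fin (m + 1) => ℝ) k).symm _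
  have he_apply : ∀ z : ℝ × (Fin m → ℝ), e z = Fin.insertNth k z.1 z.2 := fun z => by
    simp [e, MeasurableEquiv.piFinSuccAbove_symm_apply, Fin.insertNthEquiv]
  have hfiber : ∀ H : (Fin (m + 1) → ℝ) → ℝ, Integrable H →
      Integrable (fun y => ∫ t, H (Fin.insertNth k t y)) ∧
        ∫ x, H x = ∫ y, ∫ t, H (Fin.insertNth k t y) := fun H hH => by
    have hHe : Integrable (H ∘ e) (volume.prod volume) :=
      (he.integrable_comp_emb e.measurableEmbedding).2 hH
    refine ⟨by simpa only [comp_apply, he_apply] using hHe.integral_prod_right, ?_⟩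
    rw [← he.integral_comp' H, ← comp_def, integral_prod_symm _ hHe]
    simp only [comp_apply, he_apply]
  obtain ⟨hGi, hGeq⟩ := hfiber G hG
  obtain ⟨hFi, hFeq⟩ := hfiber F hF
  rw [hGeq, hFeq]
  refine integral_mono hGi hFi fun y => ?_
  simpa only [Fin.update_insertNth] using h (Fin.insertNth k 0 y)

section Conformable

variable {n : ℕ} {α : ℝ} {u : (Fin n → ℝ) → ℝ}

theorem confPDeriv_update_self (k : Fin n) (x : Fin n → ℝ) (t : ℝ) :
    confPDeriv α u k (update x k t) = t ^ (1 - α) * deriv (fun s => u (update x k s)) t := by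
  simp only [confPDeriv, update_self, update_idem]

theorem confPDeriv_eq_fderiv {x : Fin n → ℝ} (hu : DifferentiableAt ℝ u x) (k : Fin n) :
    confPDeriv α u k x = x k ^ (1 - α) * fderiv ℝ u x (Pi.single k 1) := by
  have h := fderiv_comp_deriv (l := u) (x k) (by rwa [update_eq_self])
    (hasDerivAt_update x k (x k)).differentiableAt
  rw [update_eq_self, deriv_update] at h
  exact congrArg _ h

theorem continuousOn_confPDeriv (hu : ContDiff ℝ 1 u) (k : Fin n) :
    ContinuousOn (confPDeriv α u k) {x | x k ≠ 0} := by
  refine ContinuousOn.congr (f := fun x => x k ^ (1 - α) * fderiv ℝ u x (Pi.single k 1)) ?_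
    fun x _ => confPDeriv_eq_fderiv (hu.differentiable one_ne_zero x) k
  exact ((continuous_apply k).continuousOn.rpow_const fun x hx => Or.inl hx).mul
    ((hu.continuous_fderiv one_ne_zero).clm_apply continuous_const).continuousOn

theorem confPDeriv_eq_zero_of_notMem_tsupport (hu : Differentiable ℝ u) (k : Fin n)
    {x : Fin n → ℝ} (hx : x ∉ tsupport u) : confPDeriv α u k x = 0 := by
  rw [confPDeriv_eq_fderiv (hu x),
    image_eq_zero_of_notMem_tsupport fun h => hx (tsupport_fderiv_subset ℝ h)]
  simp

theorem prod_rpow_update (x : Fin n → ℝ) (k : Fin n) (t r : ℝ) :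
    ∏ j, update x k t j ^ r = t ^ r * ∏ j ∈ {k}ᶜ, x j ^ r := by
  rw [Fintype.prod_eq_mul_prod_compl k, update_self]
  congr 1
  exact Finset.prod_congr rfl fun j hj => by rw [update_of_ne (by simpa using hj)]

theorem conformable_hardy_slice_of_pos {p : ℝ} (hp : 1 < p) (hαp : 0 < α * (2 - p))
    (hu : ContDiff ℝ 1 u) (hu0 : 0 ≤ u) (hcs : HasCompactSupport u)
    (hpos : tsupport u ⊆ {x | ∀ j, 0 < x j}) (k : Fin n) {x : Fin n → ℝ}
    (hx : ∀ j ≠ k, 0 < x j) :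
    (α * (2 - p) / p) ^ p
        * ∫ t, u (update x k t) ^ p * t ^ (-α * (p - 1)) * ∏ j, update x k t j ^ (α - 1)
      ≤ ∫ t, t ^ α * |confPDeriv α u k (update x k t)| ^ p * ∏ j, update x k t j ^ (α - 1) := by
  have hp0 : p ≠ 0 := by positivity
  set v := fun t => u (update x k t)
  have hv : ContDiff ℝ 1 v := hu.comp (contDiff_update 1 x k)
  have hvcs : HasCompactSupport v := hcs.comp_isClosedEmbedding (isClosedEmbedding_update x k)
  have hvpos : tsupport v ⊆ Ioi 0 := fun t ht => by
    simpa using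
      hpos (tsupport_comp_subset_preimage u (isClosedEmbedding_update x k).continuous ht) k
  set W := ∏ j ∈ {k}ᶜ, x j ^ (α - 1)
  have hW : 0 ≤ W := Finset.prod_nonneg fun j hj => Real.rpow_nonneg (hx j (by simpa using hj)).le _
  set γ := α * (2 - p) + p - 1
  have hH : ∀ t, u (update x k t) ^ p * t ^ (-α * (p - 1)) * ∏ j, update x k t j ^ (α - 1)
      = v t ^ p * t ^ (γ - p) * W := fun t => by
    rw [prod_rpow_update]
    by_cases ht : t ∈ tsupport v
    · rw [show γ - p = -α * (p - 1) + (α - 1) by ring, Real.rpow_add (hvpos ht)]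
      ring
    · simp [(eq_zero_and_deriv_eq_zero_of_notMem_tsupport ht).1, v, Real.zero_rpow hp0]
  have hF : ∀ t, t ^ α * |confPDeriv α u k (update x k t)| ^ p * ∏ j, update x k t j ^ (α - 1)
      = t ^ γ * |deriv v t| ^ p * W := fun t => by
    rw [prod_rpow_update, confPDeriv_update_self]
    by_cases ht : t ∈ tsupport v
    · have ht0 : 0 < t := hvpos ht
      rw [abs_mul, abs_of_pos (Real.rpow_pos_of_pos ht0 _),
        Real.mul_rpow (Real.rpow_nonneg ht0.le _) (abs_nonneg _), ← Real.rpow_mul ht0.le,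
        show γ = α + (1 - α) * p + (α - 1) by ring, Real.rpow_add ht0, Real.rpow_add ht0]
      ring
    · simp [(eq_zero_and_deriv_eq_zero_of_notMem_tsupport ht).2, v, Real.zero_rpow hp0]
  simp only [hH, hF]
  rw [integral_mul_const, integral_mul_const, ← mul_assoc]
  gcongr
  have hγ : γ - p + 1 = α * (2 - p) := by ring
  have hhardy := weighted_hardy hp (hγ ▸ hαp) hv hvcs hvpos fun t => hu0 _
  rwa [hγ] at hhardy

theorem conformable_hardy_slice {p : ℝ} (hp : 1 < p) (hαp : 0 < α * (2 - p))
    (hu : ContDiff ℝ 1 u) (hu0 : 0 ≤ u) (hcs : HasCompactSupport u)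
    (hpos : tsupport u ⊆ {x | ∀ j, 0 < x j}) (k : Fin n) (x : Fin n → ℝ) :
    (α * (2 - p) / p) ^ p
        * ∫ t, u (update x k t) ^ p * t ^ (-α * (p - 1)) * ∏ j, update x k t j ^ (α - 1)
      ≤ ∫ t, t ^ α * |confPDeriv α u k (update x k t)| ^ p * ∏ j, update x k t j ^ (α - 1) := by
  by_cases hx : ∀ j ≠ k, 0 < x j
  · exact conformable_hardy_slice_of_pos hp hαp hu hu0 hcs hpos k hx
  obtain ⟨j, hjk, hj⟩ : ∃ j, j ≠ k ∧ x j ≤ 0 := by simpa using hx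
  have hout : ∀ t, update x k t ∉ tsupport u := fun t h => by
    have := hpos h j
    rw [update_of_ne hjk] at this
    linarith
  simp [confPDeriv_eq_zero_of_notMem_tsupport (hu.differentiable one_ne_zero) k (hout _),
    image_eq_zero_of_notMem_tsupport (hout _), Real.zero_rpow (by positivity : p ≠ 0)]

theorem isOpen_setOf_forall_pos : IsOpen {x : Fin n → ℝ | ∀ j, 0 < x j} := by
  simp only [ofPred_forall]
  exact isOpen_iInter_of_finite fun j => isOpen_lt continuous_const (continuous_apply j)

theorem continuousOn_prod_rpow (r : ℝ) :
    ContinuousOn (fun x : Fin n → ℝ => ∏ j, x j ^ r) {x | ∀ j, 0 < x j} :=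
  continuousOn_finsetProd _ fun j _ =>
    (continuous_apply j).continuousOn.rpow_const fun _ hx => Or.inl (hx j).ne'

theorem integrable_conformable_potential {p : ℝ} (hp : 0 < p) (hu : Continuous u)
    (hcs : HasCompactSupport u) (hpos : tsupport u ⊆ {x | ∀ j, 0 < x j}) (k : Fin n) (r : ℝ) :
    Integrable fun x => u x ^ p * x k ^ r * ∏ j, x j ^ (α - 1) :=
  integrable_of_continuousOn_of_eq_zero_off_tsupport isOpen_setOf_forall_pos
    (((hu.rpow_const fun _ => Or.inr hp.le).continuousOn.mul
      ((continuous_apply k).continuousOn.rpow_const fun x hx => Or.inl (hx k).ne')).mul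
      (continuousOn_prod_rpow _)) hcs hpos
    fun x hx => by simp [image_eq_zero_of_notMem_tsupport hx, Real.zero_rpow hp.ne']

theorem integrable_conformable_energy {p : ℝ} (hp : 0 < p) (hu : ContDiff ℝ 1 u)
    (hcs : HasCompactSupport u) (hpos : tsupport u ⊆ {x | ∀ j, 0 < x j}) (k : Fin n) :
    Integrable fun x => x k ^ α * |confPDeriv α u k x| ^ p * ∏ j, x j ^ (α - 1) :=
  integrable_of_continuousOn_of_eq_zero_off_tsupport isOpen_setOf_forall_pos
    ((((continuous_apply k).continuousOn.rpow_const fun x hx => Or.inl (hx k).ne').mul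
      (((continuousOn_confPDeriv hu k).mono fun x hx => (hx k).ne').abs.rpow_const
        fun _ _ => Or.inr hp.le)).mul (continuousOn_prod_rpow _)) hcs hpos
    fun x hx => by
      simp [confPDeriv_eq_zero_of_notMem_tsupport (hu.differentiable one_ne_zero) k hx,
        Real.zero_rpow hp.ne']

theorem conformable_hardy_coord {p : ℝ} (hp : 1 < p) (hαp : 0 < α * (2 - p))
    (hu : ContDiff ℝ 1 u) (hu0 : 0 ≤ u) (hcs : HasCompactSupport u) {Ω : Set (Fin n → ℝ)}
    (huΩ : tsupport u ⊆ Ω) (hΩpos : Ω ⊆ {x | ∀ j, 0 < x j}) (k : Fin n) :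
    (α * (2 - p) / p) ^ p * ∫ x in Ω, u x ^ p * x k ^ (-α * (p - 1)) * ∏ j, x j ^ (α - 1)
      ≤ ∫ x in Ω, x k ^ α * |confPDeriv α u k x| ^ p * ∏ j, x j ^ (α - 1) := by
  have hp0 : 0 < p := by linarith
  have hpos := huΩ.trans hΩpos
  have hout : ∀ x ∉ Ω, x ∉ tsupport u := fun x hx h => hx (huΩ h)
  rw [setIntegral_eq_integral_of_forall_compl_eq_zero fun x hx => by
      simp [image_eq_zero_of_notMem_tsupport (hout x hx), Real.zero_rpow hp0.ne'],
    setIntegral_eq_integral_of_forall_compl_eq_zero fun x hx => by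
      simp [confPDeriv_eq_zero_of_notMem_tsupport (hu.differentiable one_ne_zero) k (hout x hx),
        Real.zero_rpow hp0.ne'],
    ← integral_const_mul]
  refine integral_le_integral_of_integral_update_le
    (integrable_conformable_energy hp0 hu hcs hpos k)
    ((integrable_conformable_potential hp0 hu.continuous hcs hpos k _).const_mul _) k fun x => ?_
  rw [integral_const_mul]
  simpa only [update_self] using conformable_hardy_slice hp hαp hu hu0 hcs hpos k x

end Conformable

theorem anisotropic_conformable_hardy_alpha_weight_general (α : ℝ)
    (n : ℕ) (Ω : Set (Fin n → ℝ)) (hΩ : IsOpen Ω)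
    (hΩpos : Ω ⊆ {x : Fin n → ℝ | ∀ k, 0 < x k})
    (a : ℝ)
    (p : Fin n → ℝ) (hp1 : ∀ k, 1 < p k) (hp2 : ∀ k, p k < a + α)
    (hp3 : ∀ k, p k * (1 - α) ≥ a - α)
    (u : (Fin n → ℝ) → ℝ) (hu : ContDiffOn ℝ 1 u Ω) (hu0 : ∀ x ∈ Ω, 0 ≤ u x)
    (husupp : HasCompactSupport u) (husubset : tsupport u ⊆ Ω) :
    ∑ k, ∫ x in Ω, (x k) ^ α * |confPDeriv α u k x| ^ (p k) * ∏ j, (x j) ^ (α - 1)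
      ≥ ∑ k, ((α + a - p k) / p k) ^ (p k)
          * ∫ x in Ω, u x ^ (p k) * (x k) ^ (-α * (p k - 1)) * ∏ j, (x j) ^ (α - 1) := by
  have hu' : ContDiff ℝ 1 u := hu.contDiff_of_tsupport_subset hΩ husubset
  have hu0' : 0 ≤ u := fun x => by
    by_cases hx : x ∈ Ω
    exacts [hu0 x hx, (image_eq_zero_of_notMem_tsupport fun h => hx (husubset h)).ge]
  refine Finset.sum_le_sum fun k _ => ?_
  have hpk : 0 < p k := by linarith [hp1 k]
  have hmass : 0 ≤ ∫ x in Ω, u x ^ (p k) * (x k) ^ (-α * (p k - 1)) * ∏ j, (x j) ^ (α - 1) :=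
    setIntegral_nonneg hΩ.measurableSet fun x hx => by
      have hxpos : ∀ j, 0 < x j := hΩpos hx
      exact mul_nonneg
        (mul_nonneg (Real.rpow_nonneg (hu0 x hx) _) (Real.rpow_nonneg (hxpos k).le _))
        (Finset.prod_nonneg fun j _ => Real.rpow_nonneg (hxpos j).le _)
  have hconst : ((α + a - p k) / p k) ^ (p k) ≤ (α * (2 - p k) / p k) ^ (p k) :=
    Real.rpow_le_rpow (div_nonneg (by linarith [hp2 k]) hpk.le)
      (div_le_div_of_nonneg_right (by linarith [hp3 k]) hpk.le) hpk.le
  exact (mul_le_mul_of_nonneg_right hconst hmass).trans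
    (conformable_hardy_coord (hp1 k) (by linarith [hp2 k, hp3 k]) hu' hu0' husupp husubset hΩpos k)

/-- Anisotropic conformable Hardy inequality with weight `x_k^α`:
`∑ₖ ∫_Ω x_k^α |D^α_{x_k} u|^{p_k} d_α x
  ≥ ∑ₖ ((α+a-p_k)/p_k)^{p_k} ∫_Ω u^{p_k} x_k^{−α(p_k−1)} d_α x`. -/
theorem anisotropic_conformable_hardy_alpha_weight (α : ℝ)
    (hα : α ∈ Set.Ioc (0 : ℝ) 1)
    (n : ℕ) (Ω : Set (Fin n → ℝ)) (hΩ : IsOpen Ω)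
    (hΩpos : Ω ⊆ {x : Fin n → ℝ | ∀ k, 0 < x k})
    (a : ℝ) (ha : α < a)
    (p : Fin n → ℝ) (hp1 : ∀ k, 1 < p k) (hp2 : ∀ k, p k < a + α)
    (hp3 : ∀ k, p k * (1 - α) ≥ a - α)
    (u : (Fin n → ℝ) → ℝ) (hu : ContDiffOn ℝ 1 u Ω) (hu0 : ∀ x ∈ Ω, 0 ≤ u x)
    (husupp : HasCompactSupport u) (husubset : tsupport u ⊆ Ω) :
    ∑ k, ∫ x in Ω, (x k) ^ α * |confPDeriv α u k x| ^ (p k) * ∏ j, (x j) ^ (α - 1)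
      ≥ ∑ k, ((α + a - p k) / p k) ^ (p k)
          * ∫ x in Ω, u x ^ (p k) * (x k) ^ (-α * (p k - 1)) * ∏ j, (x j) ^ (α - 1) :=
  anisotropic_conformable_hardy_alpha_weight_general α n Ω hΩ hΩpos a p hp1 hp2 hp3 u hu hu0 husupp
    husubset
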